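/- Write μ = μ_1 + μ_2 in L ⊗ ℚ, where μ_1 ∈ ℚ·κ and μ_2 ∈ Λ ⊗ ℚ (this decomposition exists and is unique since ℤκ ⊕ Λ has finite index in L). Then d·μ_1 ∈ ℤκ and d·μ_2 ∈ Λ, and the classes of μ_1 in (ℚκ)/ℤκ and of μ_2 in (Λ ⊗ ℚ)/Λ each have order exactly d. -/

import Mathlib

open scoped TensorProduct

/-- The canonical map `L → ℚ ⊗[ℤ] L`, `x ↦ 1 ⊗ x`. -/
noncomputable def toRat (L : Type*) [AddCommGroup L] [Module ℤ L] :
    L →ₗ[ℤ] ℚ ⊗[ℤ] L :=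
  TensorProduct.mk ℤ ℚ L 1

/-!
Write `A_ℚ := A.localized' ℚ ℤ⁰ (toRat L)` for the `ℚ`-span of a subgroup `A ≤ L` in `ℚ ⊗ L`.
Since `d • μ ∈ ℤκ ⊔ Λ` with `d ≠ 0`, the vector `μ` lies in `(ℤκ)_ℚ ⊔ Λ_ℚ`, and this sum is direct
because localization commutes with `⊓`; this gives the unique decomposition `μ = μ₁ + μ₂`.
If `n • μ₁ = a ∈ ℤκ`, then `n • μ₂ = n • μ - a` is an integral vector of `Λ_ℚ`, hence lies in `Λ`
because `Λ` is saturated; conversely `n • μ ∈ ℤκ ⊔ Λ` forces `n • μ₁ ∈ ℤκ` by directness.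
So `n • μ₁ ∈ ℤκ ↔ n • μ ∈ ℤκ ⊔ Λ`, and symmetrically for `μ₂`, using that `ℤκ` is saturated as
`κ` is primitive. Both classes therefore have the order of `μ` in `L ⧸ (ℤκ ⊔ Λ)`, which is `d`.
-/

open Submodule
open scoped nonZeroDivisors

theorem Submodule.existsUnique_add_of_mem_sup {R V : Type*} [Ring R] [AddCommGroup V] [Module R V]
    {P Q : Submodule R V} (hPQ : Disjoint P Q) {v : V} (hv : v ∈ P ⊔ Q) :
    ∃! p : V × V, p.1 ∈ P ∧ p.2 ∈ Q ∧ v = p.1 + p.2 := by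
  obtain ⟨y, hy, z, hz, rfl⟩ := mem_sup.1 hv
  refine ⟨(y, z), ⟨hy, hz, rfl⟩, ?_⟩
  rintro ⟨y', z'⟩ ⟨hy', hz', h⟩
  have hdiff : y' - y = z - z' := by rw [sub_eq_sub_iff_add_eq_add, ← h, add_comm]
  have hyy : y' = y :=
    sub_eq_zero.1 (disjoint_def.1 hPQ _ (sub_mem hy' hy) (hdiff ▸ sub_mem hz hz'))
  subst hyy
  exact Prod.ext rfl (add_left_cancel h).symm

theorem zsmul_mem_iff_dvd_of_card_quotient {G : Type*} [AddCommGroup G] {S : AddSubgroup G}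
    {μ : G} {d : ℕ} (hgen : ∀ x, ∃ n : ℤ, x - n • μ ∈ S) (hcard : Nat.card (G ⧸ S) = d) (n : ℤ) :
    n • μ ∈ S ↔ (d : ℤ) ∣ n := by
  have hμ : ∀ y : G ⧸ S, y ∈ AddSubgroup.zmultiples (μ : G ⧸ S) := by
    rintro ⟨x⟩
    obtain ⟨n, hn⟩ := hgen x
    exact ⟨n, (QuotientAddGroup.eq_iff_sub_mem.2 hn).symm⟩
  rw [← QuotientAddGroup.eq_zero_iff, QuotientAddGroup.mk_zsmul, ← hcard,
    ← addOrderOf_eq_card_of_forall_mem_zmultiples hμ, addOrderOf_dvd_iff_zsmul_eq_zero]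

section

variable {L : Type*} [AddCommGroup L]

def Submodule.IsSaturated (A : Submodule ℤ L) : Prop :=
  ∀ (m : ℤ) (x : L), m ≠ 0 → m • x ∈ A → x ∈ A

theorem Submodule.isSaturated_span_singleton [Module.IsTorsionFree ℤ L] {κ : L}
    (hκ : ∀ (m : ℤ) (x : L), κ = m • x → m = 1 ∨ m = -1) :
    (span ℤ {κ}).IsSaturated := by
  intro m x hm hx
  obtain ⟨b, hb⟩ := mem_span_singleton.1 hx
  obtain ⟨g, m', b', hg, hcop, rfl, rfl⟩ := Int.exists_gcd_one' (Int.gcd_pos_of_ne_zero_left b hm)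
  have h : b' • κ = m' • x :=
    smul_right_injective L (by omega : (g : ℤ) ≠ 0) (by simpa [smul_smul, mul_comm] using hb)
  obtain ⟨s, t, hst⟩ := Int.isCoprime_iff_gcd_eq_one.2 hcop
  -- `m'` divides `κ` by Bézout, so primitivity forces `m' = ±1`.
  have hκ' : κ = m' • (s • κ + t • x) := by
    linear_combination (norm := module) -hst • κ + t • h
  rcases hκ m' _ hκ' with rfl | rfl
  · exact mem_span_singleton.2 ⟨b', by simpa using h⟩
  · exact mem_span_singleton.2 ⟨-b', by simp [h]⟩

instance : IsLocalizedModule ℤ⁰ (toRat L) :=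
  IsLocalization.tensorProduct_isLocalizedModule ℤ⁰ ℚ

theorem toRat_injective [Module.IsTorsionFree ℤ L] : Function.Injective (toRat L) :=
  (IsLocalizedModule.injective_iff_isRegular ℤ⁰ _).2 fun c =>
    (isRegular_iff_ne_zero.2 (nonZeroDivisors.coe_ne_zero c)).isSMulRegular

theorem toRat_mem_localized'_of_zsmul_mem {A : Submodule ℤ L} {n : ℤ} {x : L} (hn : n ≠ 0)
    (hx : n • x ∈ A) : toRat L x ∈ A.localized' ℚ ℤ⁰ (toRat L) :=
  ⟨n • x, hx, ⟨n, mem_nonZeroDivisors_of_ne_zero hn⟩,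
    IsLocalizedModule.mk'_eq_iff.2 (map_zsmul _ _ _)⟩

theorem mem_of_toRat_mem_localized' [Module.IsTorsionFree ℤ L] {A : Submodule ℤ L}
    (hA : A.IsSaturated) {x : L} (hx : toRat L x ∈ A.localized' ℚ ℤ⁰ (toRat L)) : x ∈ A := by
  obtain ⟨a, ha, s, hs⟩ := hx
  rw [IsLocalizedModule.mk'_eq_iff, Submonoid.smul_def, ← map_zsmul] at hs
  exact hA s x (nonZeroDivisors.coe_ne_zero s) (toRat_injective hs ▸ ha)

theorem disjoint_localized' {A B : Submodule ℤ L} (hAB : Disjoint A B) :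
    Disjoint (A.localized' ℚ ℤ⁰ (toRat L)) (B.localized' ℚ ℤ⁰ (toRat L)) := by
  rw [disjoint_iff, ← localized'_inf, disjoint_iff.1 hAB, localized'_bot]

theorem zsmul_mem_map_toRat_iff [Module.IsTorsionFree ℤ L] {A B : Submodule ℤ L}
    (hB : B.IsSaturated) (hAB : Disjoint A B) {μ : L} {μ₁ μ₂ : ℚ ⊗[ℤ] L}
    (h₁ : μ₁ ∈ A.localized' ℚ ℤ⁰ (toRat L)) (h₂ : μ₂ ∈ B.localized' ℚ ℤ⁰ (toRat L))
    (hμ : toRat L μ = μ₁ + μ₂) (n : ℤ) :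
    n • μ₁ ∈ A.map (toRat L) ↔ n • μ ∈ A ⊔ B := by
  constructor
  · rintro ⟨a, ha, hna⟩
    have hb : n • μ - a ∈ B := mem_of_toRat_mem_localized' hB <| by
      rw [map_sub, map_zsmul, hμ, hna, smul_add, add_sub_cancel_left]
      exact zsmul_mem h₂ n
    exact mem_sup.2 ⟨a, ha, _, hb, add_sub_cancel _ _⟩
  · intro h
    obtain ⟨a, ha, b, hb, hab⟩ := mem_sup.1 h
    have hdiff : n • μ₁ - toRat L a = toRat L b - n • μ₂ := by
      rw [sub_eq_sub_iff_add_eq_add, ← smul_add, ← hμ, ← map_zsmul, ← hab, map_add, add_comm]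
    have hzero := disjoint_def.1 (disjoint_localized' hAB) _
      (sub_mem (zsmul_mem h₁ n) (map_le_localized₀ ℤ⁰ (toRat L) A (mem_map_of_mem ha)))
      (hdiff ▸ sub_mem (map_le_localized₀ ℤ⁰ (toRat L) B (mem_map_of_mem hb)) (zsmul_mem h₂ n))
    exact ⟨a, ha, (sub_eq_zero.1 hzero).symm⟩

end

theorem statement18_general {L : Type*} [AddCommGroup L] [Module ℤ L]
    [Module.Free ℤ L]
    (κ : L) (hκprim : ∀ (m : ℤ) (x : L), κ = m • x → m = 1 ∨ m = -1)
    (Λ : Submodule ℤ L)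
    (hΛprim : ∀ (m : ℤ) (x : L), m ≠ 0 → m • x ∈ Λ → x ∈ Λ)
    (hdisj : Submodule.span ℤ {κ} ⊓ Λ = ⊥)
    (d : ℕ) (hd : 1 < d) (μ : L)
    (hgen : ∀ x : L, ∃ n : ℤ, x - n • μ ∈ Submodule.span ℤ {κ} ⊔ Λ)
    (hcard : Nat.card (L ⧸ (Submodule.span ℤ {κ} ⊔ Λ)) = d) :
    (∃! p : (ℚ ⊗[ℤ] L) × (ℚ ⊗[ℤ] L),
        p.1 ∈ Submodule.span ℚ {toRat L κ} ∧
        p.2 ∈ Submodule.span ℚ (toRat L '' (Λ : Set L)) ∧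
        toRat L μ = p.1 + p.2) ∧
      ∀ μ₁ μ₂ : ℚ ⊗[ℤ] L,
        μ₁ ∈ Submodule.span ℚ {toRat L κ} →
        μ₂ ∈ Submodule.span ℚ (toRat L '' (Λ : Set L)) →
        toRat L μ = μ₁ + μ₂ →
          ((d : ℤ) • μ₁ ∈ Submodule.span ℤ {toRat L κ} ∧
            (d : ℤ) • μ₂ ∈ Submodule.map (toRat L) Λ ∧
            (∀ n : ℕ, (n : ℤ) • μ₁ ∈ Submodule.span ℤ {toRat L κ} ↔ d ∣ n) ∧
            (∀ n : ℕ, (n : ℤ) • μ₂ ∈ Submodule.map (toRat L) Λ ↔ d ∣ n)) := by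
  -- `Module ℤ L` is a subsingleton; using the instance of `AddCommGroup L` avoids the diamond
  -- between its scalar action and `zsmul`.
  obtain rfl : ‹Module ℤ L› = AddCommGroup.toIntModule L := Subsingleton.elim _ _
  set K := span ℤ {κ}
  have hK : K.IsSaturated := isSaturated_span_singleton hκprim
  have hKΛ : Disjoint K Λ := disjoint_iff.2 hdisj
  have hμ : ∀ n : ℤ, n • μ ∈ K ⊔ Λ ↔ (d : ℤ) ∣ n :=
    zsmul_mem_iff_dvd_of_card_quotient (S := (K ⊔ Λ).toAddSubgroup) hgen hcard
  have hKℚ : span ℚ {toRat L κ} = K.localized' ℚ ℤ⁰ (toRat L) := by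
    rw [localized'_span ℚ ℤ⁰ (toRat L), Set.image_singleton]
  have hKℤ : span ℤ {toRat L κ} = K.map (toRat L) := by
    rw [map_span, Set.image_singleton]
  rw [hKℚ, hKℤ, ← localized'_eq_span ℚ ℤ⁰ (toRat L)]
  refine ⟨existsUnique_add_of_mem_sup (disjoint_localized' hKΛ) ?_, fun μ₁ μ₂ h₁ h₂ h => ?_⟩
  · rw [← (localized'gi ℚ ℤ⁰ (toRat L)).gc.l_sup]
    exact toRat_mem_localized'_of_zsmul_mem (by omega) ((hμ d).2 dvd_rfl)
  have key₁ := zsmul_mem_map_toRat_iff hΛprim hKΛ h₁ h₂ h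
  have key₂ := zsmul_mem_map_toRat_iff hK hKΛ.symm h₂ h₁ (h.trans (add_comm _ _))
  simp only [key₁, key₂, sup_comm Λ, hμ, Int.natCast_dvd_natCast, dvd_refl, implies_true,
    and_self]

/-- with `μ = μ₁ + μ₂` in `L ⊗ ℚ`, `μ₁ ∈ ℚκ`, `μ₂ ∈ Λ ⊗ ℚ`
(this decomposition exists and is unique), one has `d·μ₁ ∈ ℤκ`, `d·μ₂ ∈ Λ`,
and the classes of `μ₁` in `ℚκ/ℤκ` and of `μ₂` in `(Λ ⊗ ℚ)/Λ` have order
exactly `d`. -/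
theorem statement18 {L : Type*} [AddCommGroup L] [Module ℤ L]
    [Module.Free ℤ L] [Module.Finite ℤ L]
    (κ : L) (hκprim : ∀ (m : ℤ) (x : L), κ = m • x → m = 1 ∨ m = -1)
    (Λ : Submodule ℤ L)
    (hΛprim : ∀ (m : ℤ) (x : L), m ≠ 0 → m • x ∈ Λ → x ∈ Λ)
    (hdisj : Submodule.span ℤ {κ} ⊓ Λ = ⊥)
    (d : ℕ) (hd : 1 < d) (μ : L)
    (hgen : ∀ x : L, ∃ n : ℤ, x - n • μ ∈ Submodule.span ℤ {κ} ⊔ Λ)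
    (hcard : Nat.card (L ⧸ (Submodule.span ℤ {κ} ⊔ Λ)) = d) :
    (∃! p : (ℚ ⊗[ℤ] L) × (ℚ ⊗[ℤ] L),
        p.1 ∈ Submodule.span ℚ {toRat L κ} ∧
        p.2 ∈ Submodule.span ℚ (toRat L '' (Λ : Set L)) ∧
        toRat L μ = p.1 + p.2) ∧
      ∀ μ₁ μ₂ : ℚ ⊗[ℤ] L,
        μ₁ ∈ Submodule.span ℚ {toRat L κ} →
        μ₂ ∈ Submodule.span ℚ (toRat L '' (Λ : Set L)) →
        toRat L μ = μ₁ + μ₂ →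
          ((d : ℤ) • μ₁ ∈ Submodule.span ℤ {toRat L κ} ∧
            (d : ℤ) • μ₂ ∈ Submodule.map (toRat L) Λ ∧
            (∀ n : ℕ, (n : ℤ) • μ₁ ∈ Submodule.span ℤ {toRat L κ} ↔ d ∣ n) ∧
            (∀ n : ℕ, (n : ℤ) • μ₂ ∈ Submodule.map (toRat L) Λ ↔ d ∣ n)) :=
  statement18_general κ hκprim Λ hΛprim hdisj d hd μ hgen hcard
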